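/- arXiv:2111.14008 — 7 statements merged into one kernel-verified Lean document; each statement's English description precedes it below -/
import Mathlib

section
/- Let γ > 0, B ≥ 0, ε ≥ 0 be real numbers and let β ≥ 3/(2γ). Define step sizes η₀ = β and η_t = β/t for every integer t ≥ 1. Suppose (Δ_t)_{t≥0} is a sequence of nonnegative reals satisfying Δ_{t+1} ≤ (1 − η_t γ)Δ_t + η_t² B + 2 η_t ε for every integer t ≥ 0. Then for every integer t ≥ 1, Δ_t ≤ 2β²B/t + 2βε. -/
/-!
Write `U t = 2β²B/t + 2βε` and induct on `t ≥ 1`. Since `Δ_t ≥ 0`, the possibly negative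
factor `1 - βγ/t` can be replaced by its positive part `ρ_t`, so that `Δ_t ≤ U t` gives
`Δ_{t+1} ≤ ρ_t U t + β²B/t² + 2βε/t`. The hypothesis `βγ ≥ 3/2` makes `ρ_t ≤ 1 - 1/t`, which
keeps the `ε`-part at `2βε`, and `ρ_t ≤ 1 - 3/(2t)` (or `ρ_t = 0`), which turns the `B`-part
into `2β²B (t - 1)/t² ≤ 2β²B/(t + 1)`.
-/

lemma mul_le_max_zero_mul {c x u : ℝ} (hx : 0 ≤ x) (hxu : x ≤ u) : c * x ≤ max c 0 * u := by
  rcases le_total c 0 with hc | hc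
  · rw [max_eq_right hc, zero_mul]
    exact mul_nonpos_of_nonpos_of_nonneg hc hx
  · rw [max_eq_left hc]
    exact mul_le_mul_of_nonneg_left hxu hc

lemma max_one_sub_div_zero_le {a s : ℝ} (ha : 1 ≤ a) (hs : 1 ≤ s) :
    max (1 - a / s) 0 ≤ 1 - 1 / s := by
  have hs0 : 0 < s := by linarith
  refine max_le ?_ ?_
  · gcongr
  · rw [sub_nonneg, div_le_one hs0]
    exact hs

lemma max_one_sub_div_zero_mul_add_le {a s K : ℝ} (ha : 3 / 2 ≤ a) (hs : 1 ≤ s) (hK : 0 ≤ K) :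
    max (1 - a / s) 0 * (2 * K / s) + K / s ^ 2 ≤ 2 * K / (s + 1) := by
  have hs0 : 0 < s := by linarith
  rcases le_total (1 - a / s) 0 with hρ | hρ
  · rw [max_eq_right hρ, zero_mul, zero_add, div_le_div_iff₀ (by positivity) (by positivity)]
    nlinarith [mul_nonneg hK (show 0 ≤ (2 * s + 1) * (s - 1) by nlinarith)]
  · have hρ' : 1 - a / s ≤ 1 - 3 / (2 * s) := by
      rw [div_mul_eq_div_div]
      gcongr
    calc max (1 - a / s) 0 * (2 * K / s) + K / s ^ 2
        ≤ (1 - 3 / (2 * s)) * (2 * K / s) + K / s ^ 2 := by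
          rw [max_eq_left hρ]
          gcongr
      _ = 2 * K * (s - 1) / s ^ 2 := by
          field_simp
          ring
      _ ≤ 2 * K / (s + 1) := by
          rw [div_le_div_iff₀ (by positivity) (by positivity)]
          nlinarith

lemma recursion_step_le_of_le {γ B ε β s D : ℝ} (hB : 0 ≤ B) (hε : 0 ≤ ε) (hβ : 0 ≤ β)
    (hβγ : 3 / 2 ≤ β * γ) (hs : 1 ≤ s) (hD0 : 0 ≤ D) (hD : D ≤ 2 * β ^ 2 * B / s + 2 * β * ε) :
    (1 - β / s * γ) * D + (β / s) ^ 2 * B + 2 * (β / s) * ε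
      ≤ 2 * β ^ 2 * B / (s + 1) + 2 * β * ε := by
  have hs0 : 0 < s := by linarith
  set ρ := max (1 - β * γ / s) 0
  have hcontract : (1 - β / s * γ) * D ≤ ρ * (2 * β ^ 2 * B / s + 2 * β * ε) := by
    rw [div_mul_eq_mul_div]
    exact mul_le_max_zero_mul hD0 hD
  have hρ : ρ ≤ 1 - 1 / s := max_one_sub_div_zero_le (by linarith) hs
  calc (1 - β / s * γ) * D + (β / s) ^ 2 * B + 2 * (β / s) * ε
      ≤ ρ * (2 * β ^ 2 * B / s + 2 * β * ε) + (β / s) ^ 2 * B + 2 * (β / s) * ε := by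
        gcongr
    _ = (ρ * (2 * (β ^ 2 * B) / s) + β ^ 2 * B / s ^ 2) + (ρ * (2 * β * ε) + 2 * β * ε / s) := by
        ring
    _ ≤ 2 * (β ^ 2 * B) / (s + 1) + ((1 - 1 / s) * (2 * β * ε) + 2 * β * ε / s) := by
        gcongr
        exact max_one_sub_div_zero_mul_add_le hβγ hs (by positivity)
    _ = 2 * β ^ 2 * B / (s + 1) + 2 * β * ε := by
        field_simp
        ring

theorem stmt_0 (γ B ε β : ℝ) (hγ : 0 < γ) (hB : 0 ≤ B) (hε : 0 ≤ ε)
    (hβ : 3 / (2 * γ) ≤ β)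
    (η : ℕ → ℝ) (hη0 : η 0 = β) (hη : ∀ t : ℕ, 1 ≤ t → η t = β / t)
    (Δ : ℕ → ℝ) (hΔ : ∀ t, 0 ≤ Δ t)
    (hrec : ∀ t : ℕ, Δ (t + 1) ≤ (1 - η t * γ) * Δ t + (η t) ^ 2 * B + 2 * η t * ε) :
    ∀ t : ℕ, 1 ≤ t → Δ t ≤ 2 * β ^ 2 * B / t + 2 * β * ε := by
  have hβ0 : 0 ≤ β := le_trans (by positivity) hβ
  have hβγ : 3 / 2 ≤ β * γ := by
    rw [div_le_iff₀ (by positivity)] at hβ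
    linarith
  intro t ht
  induction t, ht using Nat.le_induction with
  | base =>
    have hfirst : (1 - β * γ) * Δ 0 ≤ 0 :=
      mul_nonpos_of_nonpos_of_nonneg (by linarith) (hΔ 0)
    have h := hrec 0
    rw [hη0] at h
    push_cast
    linarith [mul_nonneg (sq_nonneg β) hB]
  | succ t ht IH =>
    have h := hrec t
    rw [hη t ht] at h
    push_cast
    exact h.trans (recursion_step_le_of_le hB hε hβ0 hβγ (by exact_mod_cast ht) (hΔ t) IH)
end

section
/- Let H be a real inner product space and let k range over a nonempty finite index set. Let p_k ≥ 0 with ∑_k p_k = 1, let η > 0, G ≥ 0 and let E ≥ 1 be an integer. For each k let θ_k, g_k, ĝ_k ∈ H, γ_k > 0 and ε_k ≥ 0, and let θ* ∈ H; set θ̄ = ∑_k p_k θ_k. Assume: (i) ‖g_k‖ ≤ G for every k; (ii) ⟨θ_k − θ*, ĝ_k⟩ ≥ (γ_k/2)‖θ_k − θ*‖² − ε_k for every k; (iii) ∑_k p_k ‖θ̄ − θ_k‖² ≤ 8(E−1)²η²G². Then ‖θ̄ − η ∑_k p_k g_k − θ*‖² ≤ (1 − η min_k γ_k)‖θ̄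 − θ*‖² + (8(E−1)² + 2)η²G² + 2η( ∑_k p_k ε_k + ∑_k p_k ‖θ_k − θ*‖ · ‖g_k − ĝ_k‖ ). -/
/-!
Write `v = ∑ p_k g_k` and expand `‖(θ̄ - θ*) - η v‖²`. The cross term `⟨θ̄ - θ*, g_k⟩` splits as
`⟨θ̄ - θ_k, g_k⟩ + ⟨θ_k - θ*, g_k - ĝ_k⟩ + ⟨θ_k - θ*, ĝ_k⟩`: the client drift is absorbed by AM-GM
into `‖θ̄ - θ_k‖² + η²G²`, the gradient noise is bounded by Cauchy-Schwarz, and the last term by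
relaxed convexity. Jensen's inequality `‖θ̄ - θ*‖² ≤ ∑ p_k ‖θ_k - θ*‖²` turns the convexity gains
into the contraction factor `1 - η min_k γ_k`, and `‖v‖ ≤ G` bounds the quadratic term.
-/

open RealInnerProductSpace Finset

section WeightedMean

variable {H : Type*} {ι : Type*} {s : Finset ι} {p : ι → ℝ}

theorem sum_smul_sub_of_sum_eq_one [AddCommGroup H] [Module ℝ H] (hp1 : ∑ i ∈ s, p i = 1)
    (x : ι → H) (y : H) : ∑ i ∈ s, p i • x i - y = ∑ i ∈ s, p i • (x i - y) := by
  simp only [smul_sub, sum_sub_distrib, ← sum_smul, hp1, one_smul]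

variable [NormedAddCommGroup H] [NormedSpace ℝ H]

theorem norm_sum_smul_le_of_norm_le (hp : ∀ i ∈ s, 0 ≤ p i) (hp1 : ∑ i ∈ s, p i = 1)
    {x : ι → H} {G : ℝ} (hx : ∀ i ∈ s, ‖x i‖ ≤ G) : ‖∑ i ∈ s, p i • x i‖ ≤ G :=
  mem_closedBall_zero_iff.1 <|
    (convex_closedBall 0 G).sum_mem hp hp1 fun i hi ↦ mem_closedBall_zero_iff.2 (hx i hi)

theorem sq_norm_sum_smul_le (hp : ∀ i ∈ s, 0 ≤ p i) (hp1 : ∑ i ∈ s, p i = 1) (x : ι → H) :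
    ‖∑ i ∈ s, p i • x i‖ ^ 2 ≤ ∑ i ∈ s, p i * ‖x i‖ ^ 2 :=
  (convexOn_univ_norm.pow (fun x _ ↦ norm_nonneg x) 2).map_sum_le hp hp1 fun _ _ ↦ Set.mem_univ _

end WeightedMean

section RelaxedConvexity

variable {H : Type*} [NormedAddCommGroup H] [InnerProductSpace ℝ H]

theorem neg_two_mul_inner_le_of_relaxed_convex {xbar x xs g gstar : H} {η G γ ε : ℝ}
    (hη : 0 ≤ η) (hg : ‖g‖ ≤ G) (hconv : γ / 2 * ‖x - xs‖ ^ 2 - ε ≤ ⟪x - xs, gstar⟫) :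
    -(2 * η) * ⟪xbar - xs, g⟫ ≤ ‖xbar - x‖ ^ 2 + η ^ 2 * G ^ 2 +
      2 * η * (ε + ‖x - xs‖ * ‖g - gstar‖) - η * γ * ‖x - xs‖ ^ 2 := by
  have hsplit : ⟪xbar - xs, g⟫ = ⟪xbar - x, g⟫ + ⟪x - xs, g - gstar⟫ + ⟪x - xs, gstar⟫ := by
    rw [← sub_add_sub_cancel xbar x xs, inner_add_left, inner_sub_right]
    ring
  have hdrift : -(‖xbar - x‖ * G) ≤ ⟪xbar - x, g⟫ := by
    have := mul_le_mul_of_nonneg_left hg (norm_nonneg (xbar - x))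
    linarith [neg_le_of_abs_le (abs_real_inner_le_norm (xbar - x) g)]
  have hnoise : -(‖x - xs‖ * ‖g - gstar‖) ≤ ⟪x - xs, g - gstar⟫ :=
    neg_le_of_abs_le (abs_real_inner_le_norm _ _)
  have hamgm : 2 * η * (‖xbar - x‖ * G) ≤ ‖xbar - x‖ ^ 2 + η ^ 2 * G ^ 2 := by
    nlinarith [sq_nonneg (‖xbar - x‖ - η * G)]
  rw [hsplit]
  nlinarith

theorem neg_two_mul_inner_sum_smul_le_of_relaxed_convex {ι : Type*} {s : Finset ι}
    {p : ι → ℝ} (hp : ∀ i ∈ s, 0 ≤ p i) (hp1 : ∑ i ∈ s, p i = 1)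
    {xbar xs : H} {x g gstar : ι → H} {η G m : ℝ} {ε : ι → ℝ} (hη : 0 ≤ η)
    (hg : ∀ i ∈ s, ‖g i‖ ≤ G)
    (hconv : ∀ i ∈ s, m / 2 * ‖x i - xs‖ ^ 2 - ε i ≤ ⟪x i - xs, gstar i⟫) :
    -(2 * η) * ⟪xbar - xs, ∑ i ∈ s, p i • g i⟫ ≤
      ∑ i ∈ s, p i * ‖xbar - x i‖ ^ 2 + η ^ 2 * G ^ 2 +
        2 * η * (∑ i ∈ s, p i * ε i + ∑ i ∈ s, p i * (‖x i - xs‖ * ‖g i - gstar i‖)) -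
        η * m * ∑ i ∈ s, p i * ‖x i - xs‖ ^ 2 := by
  have hclient : ∀ i ∈ s, p i * (-(2 * η) * ⟪xbar - xs, g i⟫) ≤
      p i * ‖xbar - x i‖ ^ 2 + η ^ 2 * G ^ 2 * p i +
        2 * η * (p i * ε i + p i * (‖x i - xs‖ * ‖g i - gstar i‖)) -
        η * m * (p i * ‖x i - xs‖ ^ 2) := fun i hi ↦ by
    have := neg_two_mul_inner_le_of_relaxed_convex (xbar := xbar) hη (hg i hi) (hconv i hi)
    linarith [mul_le_mul_of_nonneg_left this (hp i hi)]
  have hsum := sum_le_sum hclient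
  simp only [← mul_sum, sum_add_distrib, sum_sub_distrib, hp1] at hsum
  have hinner : ∑ i ∈ s, p i * (-(2 * η) * ⟪xbar - xs, g i⟫) =
      -(2 * η) * ⟪xbar - xs, ∑ i ∈ s, p i • g i⟫ := by
    simp only [inner_sum, real_inner_smul_right, mul_sum]
    exact sum_congr rfl fun i _ ↦ by ring
  linarith

end RelaxedConvexity

theorem stmt_1_general {H : Type*} [NormedAddCommGroup H] [InnerProductSpace ℝ H]
    {ι : Type*} [Fintype ι] [Nonempty ι]
    (p : ι → ℝ) (hp : ∀ k, 0 ≤ p k) (hp1 : ∑ k, p k = 1)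
    (η G : ℝ) (hη : 0 < η) (E : ℕ)
    (θ g gstar : ι → H) (γ : ι → ℝ) (hγ : ∀ k, 0 < γ k) (ε : ι → ℝ)
    (θs : H)
    (hg : ∀ k, ‖g k‖ ≤ G)
    (hconv : ∀ k, (γ k / 2) * ‖θ k - θs‖ ^ 2 - ε k ≤ inner ℝ (θ k - θs) (gstar k))
    (hdrift : ∑ k, p k * ‖(∑ j, p j • θ j) - θ k‖ ^ 2 ≤
      8 * ((E : ℝ) - 1) ^ 2 * η ^ 2 * G ^ 2) :
    ‖(∑ k, p k • θ k) - η • (∑ k, p k • g k) - θs‖ ^ 2 ≤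
      (1 - η * Finset.univ.inf' Finset.univ_nonempty γ) * ‖(∑ k, p k • θ k) - θs‖ ^ 2 +
        (8 * ((E : ℝ) - 1) ^ 2 + 2) * η ^ 2 * G ^ 2 +
        2 * η * ((∑ k, p k * ε k) + ∑ k, p k * (‖θ k - θs‖ * ‖g k - gstar k‖)) := by
  set θbar := ∑ k, p k • θ k
  set m := univ.inf' univ_nonempty γ
  have hm : 0 ≤ m := (lt_inf'_iff univ_nonempty).2 (fun k _ ↦ hγ k) |>.le
  have hconv_m (k : ι) (_ : k ∈ univ) :
      m / 2 * ‖θ k - θs‖ ^ 2 - ε k ≤ ⟪θ k - θs, gstar k⟫ :=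
    le_trans (by gcongr; exact inf'_le γ (mem_univ k)) (hconv k)
  have hcross := neg_two_mul_inner_sum_smul_le_of_relaxed_convex (xbar := θbar)
    (fun k _ ↦ hp k) hp1 hη.le (fun k _ ↦ hg k) hconv_m
  have hjensen : ‖θbar - θs‖ ^ 2 ≤ ∑ k, p k * ‖θ k - θs‖ ^ 2 := by
    rw [sum_smul_sub_of_sum_eq_one hp1]
    exact sq_norm_sum_smul_le (fun k _ ↦ hp k) hp1 _
  have hv : ‖∑ k, p k • g k‖ ^ 2 ≤ G ^ 2 := pow_le_pow_left₀ (norm_nonneg _)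
    (norm_sum_smul_le_of_norm_le (fun k _ ↦ hp k) hp1 fun k _ ↦ hg k) 2
  have hexpand : ‖θbar - η • ∑ k, p k • g k - θs‖ ^ 2 = ‖θbar - θs‖ ^ 2 -
      2 * η * ⟪θbar - θs, ∑ k, p k • g k⟫ + η ^ 2 * ‖∑ k, p k • g k‖ ^ 2 := by
    rw [sub_right_comm, norm_sub_sq_real, real_inner_smul_right, norm_smul,
      Real.norm_of_nonneg hη.le]
    ring
  rw [hexpand]
  linarith [mul_le_mul_of_nonneg_left hjensen (mul_nonneg hη.le hm),
    mul_le_mul_of_nonneg_left hv (sq_nonneg η)]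

theorem stmt_1 {H : Type*} [NormedAddCommGroup H] [InnerProductSpace ℝ H]
    {ι : Type*} [Fintype ι] [Nonempty ι]
    (p : ι → ℝ) (hp : ∀ k, 0 ≤ p k) (hp1 : ∑ k, p k = 1)
    (η G : ℝ) (hη : 0 < η) (hG : 0 ≤ G) (E : ℕ) (hE : 1 ≤ E)
    (θ g gstar : ι → H) (γ : ι → ℝ) (hγ : ∀ k, 0 < γ k) (ε : ι → ℝ) (hε : ∀ k, 0 ≤ ε k)
    (θs : H)
    (hg : ∀ k, ‖g k‖ ≤ G)
    (hconv : ∀ k, (γ k / 2) * ‖θ k - θs‖ ^ 2 - ε k ≤ inner ℝ (θ k - θs) (gstar k))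
    (hdrift : ∑ k, p k * ‖(∑ j, p j • θ j) - θ k‖ ^ 2 ≤
      8 * ((E : ℝ) - 1) ^ 2 * η ^ 2 * G ^ 2) :
    ‖(∑ k, p k • θ k) - η • (∑ k, p k • g k) - θs‖ ^ 2 ≤
      (1 - η * Finset.univ.inf' Finset.univ_nonempty γ) * ‖(∑ k, p k • θ k) - θs‖ ^ 2 +
        (8 * ((E : ℝ) - 1) ^ 2 + 2) * η ^ 2 * G ^ 2 +
        2 * η * ((∑ k, p k * ε k) + ∑ k, p k * (‖θ k - θs‖ * ‖g k - gstar k‖)) :=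
  stmt_1_general p hp hp1 η G hη E θ g gstar γ hγ ε θs hg hconv hdrift
end

section
/- Let H be a real inner product space and let k range over a nonempty finite index set with weights p_k ≥ 0, ∑_k p_k = 1. Let G ≥ 0, let E ≥ 1 and t₀ ≤ t be integers with t − t₀ ≤ E − 1, and let η : {t₀, …, t} → ℝ be positive and nonincreasing with η(t₀) ≤ 2η(t). Let θ₀ ∈ H, and for each k and each i ∈ {t₀, …, t−1} let g_{k,i} ∈ H with ‖g_{k,i}‖ ≤ G. Set θ_k = θ₀ − ∑_{i=t₀}^{t−1} η(i) g_{k,i} and θ̄ = ∑_k p_k θ_k. Then ∑_k p_k ‖θ̄ − θ_k‖² ≤ 8(E−1)² η(t)² G². -/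
/-!
Centring the local parameters at the common starting point θ₀ instead of at their weighted mean
can only increase the weighted spread, since the mean minimises it. Each θ₀ - θ_k is a sum of at
most E - 1 steps of length at most η(t₀) G ≤ 2 η(t) G, so the spread is at most
(2 (E - 1) η(t) G)² ≤ 8 (E - 1)² η(t)² G².
-/

open Finset

section WeightedMean

variable {H : Type*} [NormedAddCommGroup H] [InnerProductSpace ℝ H] {ι : Type*} [Fintype ι]

theorem sum_mul_norm_sub_sq_eq_add_norm_sub_sq (p : ι → ℝ) (hp1 : ∑ k, p k = 1) (x : ι → H)
    (c : H) :
    ∑ k, p k * ‖c - x k‖ ^ 2 =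
      ∑ k, p k * ‖(∑ j, p j • x j) - x k‖ ^ 2 + ‖c - ∑ j, p j • x j‖ ^ 2 := by
  set m := ∑ j, p j • x j
  have hcross : ∑ k, p k * inner ℝ (c - m) (m - x k) = 0 := by
    have hsum : ∑ k, p k • (m - x k) = 0 := by
      simp only [smul_sub, sum_sub_distrib, ← sum_smul, hp1, one_smul, m, sub_self]
    simp_rw [← real_inner_smul_right, ← inner_sum, hsum, inner_zero_right]
  calc ∑ k, p k * ‖c - x k‖ ^ 2
      = ∑ k, p k * ‖(c - m) + (m - x k)‖ ^ 2 := by simp only [sub_add_sub_cancel]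
    _ = ∑ k, p k * ‖m - x k‖ ^ 2 + 2 * ∑ k, p k * inner ℝ (c - m) (m - x k)
          + (∑ k, p k) * ‖c - m‖ ^ 2 := by
        simp only [norm_add_sq_real, mul_sum, sum_mul, ← sum_add_distrib]
        exact sum_congr rfl fun k _ => by ring
    _ = ∑ k, p k * ‖m - x k‖ ^ 2 + ‖c - m‖ ^ 2 := by rw [hcross, hp1]; ring

theorem sum_mul_norm_weightedMean_sub_sq_le (p : ι → ℝ) (hp1 : ∑ k, p k = 1) (x : ι → H)
    (c : H) :
    ∑ k, p k * ‖(∑ j, p j • x j) - x k‖ ^ 2 ≤ ∑ k, p k * ‖c - x k‖ ^ 2 := by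
  rw [sum_mul_norm_sub_sq_eq_add_norm_sub_sq p hp1 x c]
  exact le_add_of_nonneg_right (sq_nonneg _)

end WeightedMean

theorem norm_sum_smul_le_card_mul {E : Type*} [SeminormedAddCommGroup E] [NormedSpace ℝ E]
    {ι : Type*} (s : Finset ι) (a : ι → ℝ) (g : ι → E) {A G : ℝ}
    (ha : ∀ i ∈ s, |a i| ≤ A) (hg : ∀ i ∈ s, ‖g i‖ ≤ G) :
    ‖∑ i ∈ s, a i • g i‖ ≤ #s * (A * G) := by
  calc ‖∑ i ∈ s, a i • g i‖ ≤ ∑ _i ∈ s, A * G := norm_sum_le_of_le s fun i hi => by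
        rw [norm_smul, Real.norm_eq_abs]
        exact mul_le_mul (ha i hi) (hg i hi) (norm_nonneg _) ((abs_nonneg _).trans (ha i hi))
    _ = #s * (A * G) := by rw [sum_const, nsmul_eq_mul]

theorem stmt_2_general {H : Type*} [NormedAddCommGroup H] [InnerProductSpace ℝ H]
    {ι : Type*} [Fintype ι]
    (p : ι → ℝ) (hp : ∀ k, 0 ≤ p k) (hp1 : ∑ k, p k = 1)
    (G : ℝ) (hG : 0 ≤ G) (E t₀ t : ℕ) (hE : 1 ≤ E) (ht₀ : t₀ ≤ t)
    (hEt : t - t₀ ≤ E - 1)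
    (η : ℕ → ℝ) (hηpos : ∀ i, t₀ ≤ i → i ≤ t → 0 < η i)
    (hηmono : ∀ i j, t₀ ≤ i → i ≤ j → j ≤ t → η j ≤ η i)
    (hη2 : η t₀ ≤ 2 * η t)
    (θ₀ : H) (g : ι → ℕ → H) (hg : ∀ k i, t₀ ≤ i → i < t → ‖g k i‖ ≤ G)
    (θ : ι → H) (hθ : ∀ k, θ k = θ₀ - ∑ i ∈ Finset.Ico t₀ t, η i • g k i) :
    ∑ k, p k * ‖(∑ j, p j • θ j) - θ k‖ ^ 2 ≤
      8 * ((E : ℝ) - 1) ^ 2 * (η t) ^ 2 * G ^ 2 := by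
  set B := 2 * ((E : ℝ) - 1) * η t * G
  have hE1 : ((t - t₀ : ℕ) : ℝ) ≤ (E : ℝ) - 1 := by
    simpa [Nat.cast_sub hE] using (Nat.cast_le (α := ℝ)).mpr hEt
  have hstep : ∀ i ∈ Ico t₀ t, |η i| ≤ 2 * η t := fun i hi => by
    obtain ⟨hi₀, hit⟩ := mem_Ico.mp hi
    rw [abs_of_pos (hηpos i hi₀ hit.le)]
    exact (hηmono t₀ i le_rfl hi₀ hit.le).trans hη2
  have hdrift : ∀ k, ‖θ₀ - θ k‖ ≤ B := fun k => by
    rw [hθ k, sub_sub_cancel]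
    refine (norm_sum_smul_le_card_mul _ _ _ hstep
      fun i hi => hg k i (mem_Ico.mp hi).1 (mem_Ico.mp hi).2).trans ?_
    rw [Nat.card_Ico]
    have := (hηpos t ht₀ le_rfl).le
    calc ((t - t₀ : ℕ) : ℝ) * (2 * η t * G) ≤ ((E : ℝ) - 1) * (2 * η t * G) := by gcongr
      _ = B := by ring
  calc ∑ k, p k * ‖(∑ j, p j • θ j) - θ k‖ ^ 2
      ≤ ∑ k, p k * ‖θ₀ - θ k‖ ^ 2 := sum_mul_norm_weightedMean_sub_sq_le p hp1 θ θ₀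
    _ ≤ ∑ k, p k * B ^ 2 := by
        gcongr with k
        · exact hp k
        · exact hdrift k
    _ = B ^ 2 := by rw [← sum_mul, hp1, one_mul]
    _ ≤ 8 * ((E : ℝ) - 1) ^ 2 * (η t) ^ 2 * G ^ 2 := by
        nlinarith [sq_nonneg (((E : ℝ) - 1) * η t * G)]

theorem stmt_2 {H : Type*} [NormedAddCommGroup H] [InnerProductSpace ℝ H]
    {ι : Type*} [Fintype ι] [Nonempty ι]
    (p : ι → ℝ) (hp : ∀ k, 0 ≤ p k) (hp1 : ∑ k, p k = 1)
    (G : ℝ) (hG : 0 ≤ G) (E t₀ t : ℕ) (hE : 1 ≤ E) (ht₀ : t₀ ≤ t)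
    (hEt : t - t₀ ≤ E - 1)
    (η : ℕ → ℝ) (hηpos : ∀ i, t₀ ≤ i → i ≤ t → 0 < η i)
    (hηmono : ∀ i j, t₀ ≤ i → i ≤ j → j ≤ t → η j ≤ η i)
    (hη2 : η t₀ ≤ 2 * η t)
    (θ₀ : H) (g : ι → ℕ → H) (hg : ∀ k i, t₀ ≤ i → i < t → ‖g k i‖ ≤ G)
    (θ : ι → H) (hθ : ∀ k, θ k = θ₀ - ∑ i ∈ Finset.Ico t₀ t, η i • g k i) :
    ∑ k, p k * ‖(∑ j, p j • θ j) - θ k‖ ^ 2 ≤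
      8 * ((E : ℝ) - 1) ^ 2 * (η t) ^ 2 * G ^ 2 :=
  stmt_2_general p hp hp1 G hG E t₀ t hE ht₀ hEt η hηpos hηmono hη2 θ₀ g hg θ hθ
end

section
/- Let N ≥ 1 be an integer, let b > (3 + √21)/4, α > 0, C ≥ 0, θ_min > 0, and let θ₁ ≥ θ_min and θ₂ ≥ θ_min. Let λ_1, …, λ_N be nonnegative reals satisfying λ_j ≤ C · j^{−2b(2b−1)/(4b+3)} · N^{1+α/2} for every j ∈ {1, …, N}, and set ρ = (2+α)(4b+3)/(4b(2b−1)). Then ∑_{j=1}^N λ_j²/(θ₁λ_j + θ₂)² ≤ (N^ρ + 1)/θ_min² + C²(4b+3)N^ρ/(θ_min²(8b² − 8b − 3)). -/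
/-!
With `s = (8b² − 8b − 3)/(4b + 3)` the hypothesis reads `λ_j² ≤ C² N^{2+α} j^{−(s+1)}`, and the
condition on `b` is what makes `s` positive. Each summand is at most `1/θ_min²` and at most
`λ_j²/θ_min²`. Use the first bound for `j ≤ ⌈R⌉` and the second for `j > ⌈R⌉`, where
`∑_{j > M} j^{−(s+1)} ≤ M^{−s}/s` because Bernoulli's inequality makes `j^{−(s+1)}` at most
`((j−1)^{−s} − j^{−s})/s`, which telescopes. The cut-off `R = N^ρ` balances the two parts,
since `ρ (s + 1) = 2 + α`.
-/

open Finset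

lemma mul_rpow_neg_succ_le_rpow_neg_sub {s x : ℝ} (hs : 0 ≤ s) (hx : 0 < x) :
    s * (x + 1) ^ (-(s + 1)) ≤ x ^ (-s) - (x + 1) ^ (-s) := by
  have hx1 : 0 < x + 1 := by linarith
  have hA : 0 < x ^ s := Real.rpow_pos_of_pos hx s
  have hB : 0 < (x + 1) ^ s := Real.rpow_pos_of_pos hx1 s
  have hbernoulli : 1 + (s + 1) * (1 / x) ≤ (1 + 1 / x) ^ (s + 1) :=
    one_add_mul_self_le_rpow_one_add (by have := one_div_pos.mpr hx; linarith) (by linarith)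
  rw [show 1 + 1 / x = (x + 1) / x by field_simp, Real.div_rpow hx1.le hx.le,
    Real.rpow_add_one hx1.ne', Real.rpow_add_one hx.ne'] at hbernoulli
  rw [Real.rpow_neg hx.le, Real.rpow_neg hx1.le, Real.rpow_neg hx1.le, Real.rpow_add_one hx1.ne']
  rw [le_div_iff₀ (by positivity)] at hbernoulli
  field_simp at hbernoulli ⊢
  nlinarith

lemma mul_sum_Ioc_rpow_neg_succ_le_sub {s : ℝ} (hs : 0 ≤ s) {M N : ℕ} (hM : 0 < M)
    (hMN : M ≤ N) :
    s * ∑ j ∈ Ioc M N, (j : ℝ) ^ (-(s + 1)) ≤ (M : ℝ) ^ (-s) - (N : ℝ) ^ (-s) := by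
  induction N, hMN using Nat.le_induction with
  | base => simp
  | succ n hMn ih =>
    have hstep := mul_rpow_neg_succ_le_rpow_neg_sub hs (x := n) (Nat.cast_pos.mpr (by omega))
    rw [sum_Ioc_succ_top hMn, mul_add]
    push_cast
    linarith

lemma mul_sum_Ioc_rpow_neg_succ_le {s : ℝ} (hs : 0 ≤ s) {M : ℕ} (hM : 0 < M) (N : ℕ) :
    s * ∑ j ∈ Ioc M N, (j : ℝ) ^ (-(s + 1)) ≤ (M : ℝ) ^ (-s) := by
  rcases le_total M N with hMN | hNM
  · have := mul_sum_Ioc_rpow_neg_succ_le_sub hs hM hMN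
    have : 0 ≤ (N : ℝ) ^ (-s) := by positivity
    linarith
  · rw [Ioc_eq_empty_of_le hNM, sum_empty, mul_zero]
    positivity

lemma sum_Icc_le_of_le_one_of_le_rpow_neg {s K R : ℝ} (hs : 0 < s) (hK : 0 ≤ K) (hR : 0 < R)
    {N : ℕ} {a : ℕ → ℝ} (ha_one : ∀ j ∈ Icc 1 N, a j ≤ 1)
    (ha_pow : ∀ j ∈ Icc 1 N, a j ≤ K * (j : ℝ) ^ (-(s + 1))) :
    ∑ j ∈ Icc 1 N, a j ≤ R + 1 + K * R ^ (-s) / s := by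
  set M := ⌈R⌉₊
  have hM : 0 < M := Nat.ceil_pos.mpr hR
  rw [← sum_filter_add_sum_filter_not _ (· ≤ M)]
  have hhead : ∑ j ∈ (Icc 1 N).filter (· ≤ M), a j ≤ R + 1 := by
    calc ∑ j ∈ (Icc 1 N).filter (· ≤ M), a j
        ≤ ∑ _j ∈ (Icc 1 N).filter (· ≤ M), (1 : ℝ) :=
          sum_le_sum fun j hj => ha_one j (mem_filter.mp hj).1
      _ ≤ M := by
          rw [sum_const, nsmul_one, Nat.cast_le]
          calc _ ≤ #(Icc 1 M) := card_le_card fun j hj => by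
                  simp only [mem_filter, mem_Icc] at hj ⊢; omega
            _ = M := by simp
      _ ≤ R + 1 := (Nat.ceil_lt_add_one hR.le).le
  have htail : ∑ j ∈ (Icc 1 N).filter (¬ · ≤ M), a j ≤ K * R ^ (-s) / s := by
    calc ∑ j ∈ (Icc 1 N).filter (¬ · ≤ M), a j
        ≤ ∑ j ∈ (Icc 1 N).filter (¬ · ≤ M), K * (j : ℝ) ^ (-(s + 1)) :=
          sum_le_sum fun j hj => ha_pow j (mem_filter.mp hj).1
      _ ≤ ∑ j ∈ Ioc M N, K * (j : ℝ) ^ (-(s + 1)) := by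
          refine sum_le_sum_of_subset_of_nonneg (fun j hj => ?_)
            fun _ _ _ => mul_nonneg hK (by positivity)
          simp only [mem_filter, mem_Icc, mem_Ioc] at hj ⊢; omega
      _ = K * (s * ∑ j ∈ Ioc M N, (j : ℝ) ^ (-(s + 1))) / s := by
          rw [← mul_sum]; field_simp
      _ ≤ K * (M : ℝ) ^ (-s) / s := by
          gcongr; exact mul_sum_Ioc_rpow_neg_succ_le hs.le hM N
      _ ≤ K * R ^ (-s) / s := by
          have := Real.rpow_le_rpow_of_nonpos hR (Nat.le_ceil R) (neg_nonpos.mpr hs.le)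
          gcongr
  linarith

lemma sq_mul_sq_div_sq_affine_le_one {θ θ₁ θ₂ l : ℝ} (hθ : 0 ≤ θ) (h₁ : θ ≤ θ₁) (h₂ : 0 ≤ θ₂)
    (hl : 0 ≤ l) : θ ^ 2 * (l ^ 2 / (θ₁ * l + θ₂) ^ 2) ≤ 1 := by
  have hθl : θ * l ≤ θ₁ * l + θ₂ := by nlinarith
  have hθl₀ : 0 ≤ θ * l := mul_nonneg hθ hl
  rw [← div_pow, ← mul_pow, ← mul_div_assoc]
  exact pow_le_one₀ (div_nonneg hθl₀ (hθl₀.trans hθl)) (div_le_one_of_le₀ hθl (hθl₀.trans hθl))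

lemma sq_mul_sq_div_sq_affine_le_sq {θ θ₁ θ₂ l : ℝ} (hθ : 0 ≤ θ) (h₁ : 0 ≤ θ₁) (h₂ : θ ≤ θ₂)
    (hl : 0 ≤ l) : θ ^ 2 * (l ^ 2 / (θ₁ * l + θ₂) ^ 2) ≤ l ^ 2 := by
  have hθ_le : θ ≤ θ₁ * l + θ₂ := by nlinarith [mul_nonneg h₁ hl]
  have hden : 0 ≤ θ₁ * l + θ₂ := hθ.trans hθ_le
  rw [← div_pow, ← mul_pow, ← mul_div_assoc]
  refine pow_le_pow_left₀ (div_nonneg (mul_nonneg hθ hl) hden) (div_le_of_le_mul₀ hden hl ?_) 2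
  nlinarith [mul_le_mul_of_nonneg_left hθ_le hl]

lemma sq_le_sq_mul_rpow_mul_rpow {l C x y e f : ℝ} (hl : 0 ≤ l) (hx : 0 ≤ x) (hy : 0 ≤ y)
    (h : l ≤ C * x ^ e * y ^ f) : l ^ 2 ≤ C ^ 2 * x ^ (e * 2) * y ^ (f * 2) := by
  rw [Real.rpow_mul hx, Real.rpow_mul hy, Real.rpow_ofNat, Real.rpow_ofNat, ← mul_pow, ← mul_pow]
  exact pow_le_pow_left₀ hl h 2

theorem stmt_8_general (N : ℕ) (hN : 1 ≤ N) (b α C θmin θ₁ θ₂ : ℝ)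
    (hb : (3 + Real.sqrt 21) / 4 < b) (hθmin : 0 < θmin)
    (h1 : θmin ≤ θ₁) (h2 : θmin ≤ θ₂)
    (lam : ℕ → ℝ) (hlam0 : ∀ j ∈ Finset.Icc 1 N, 0 ≤ lam j)
    (hlam : ∀ j ∈ Finset.Icc 1 N,
      lam j ≤ C * (j : ℝ) ^ (-(2 * b * (2 * b - 1)) / (4 * b + 3)) *
        (N : ℝ) ^ (1 + α / 2)) :
    ∑ j ∈ Finset.Icc 1 N, (lam j) ^ 2 / (θ₁ * lam j + θ₂) ^ 2 ≤
      ((N : ℝ) ^ ((2 + α) * (4 * b + 3) / (4 * b * (2 * b - 1))) + 1) / θmin ^ 2 +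
        C ^ 2 * (4 * b + 3) *
          (N : ℝ) ^ ((2 + α) * (4 * b + 3) / (4 * b * (2 * b - 1))) /
          (θmin ^ 2 * (8 * b ^ 2 - 8 * b - 3)) := by
  have hb_quad : 0 < 8 * b ^ 2 - 8 * b - 3 := by
    nlinarith [Real.sqrt_nonneg 21, Real.sq_sqrt (show (0 : ℝ) ≤ 21 by norm_num)]
  have hb_half : 1 / 2 < b := by linarith [Real.sqrt_nonneg 21]
  have hb_lin : 0 < 4 * b + 3 := by linarith
  have hb₀ : b ≠ 0 := by positivity
  have hb₁ : 2 * b - 1 ≠ 0 := by linarith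
  set s := (8 * b ^ 2 - 8 * b - 3) / (4 * b + 3) with hs_def
  set ρ := (2 + α) * (4 * b + 3) / (4 * b * (2 * b - 1))
  have hs : 0 < s := div_pos hb_quad hb_lin
  have hρs : 2 + α - ρ * s = ρ := by
    simp only [ρ, hs_def]; field_simp; ring
  have hexp : -(2 * b * (2 * b - 1)) / (4 * b + 3) * 2 = -(s + 1) := by
    rw [hs_def]; field_simp; ring
  have hN₀ : (0 : ℝ) < N := Nat.cast_pos.mpr hN
  have hR : 0 < (N : ℝ) ^ ρ := Real.rpow_pos_of_pos hN₀ ρ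
  have hlam_sq : ∀ j ∈ Icc 1 N, lam j ^ 2 ≤ C ^ 2 * (N : ℝ) ^ (2 + α) * (j : ℝ) ^ (-(s + 1)) := by
    intro j hj
    have := sq_le_sq_mul_rpow_mul_rpow (hlam0 j hj) (Nat.cast_nonneg j) hN₀.le (hlam j hj)
    rwa [hexp, show (1 + α / 2) * 2 = 2 + α by ring, mul_right_comm] at this
  have hsum := sum_Icc_le_of_le_one_of_le_rpow_neg hs (by positivity) hR
    (a := fun j => θmin ^ 2 * (lam j ^ 2 / (θ₁ * lam j + θ₂) ^ 2))
    (fun j hj => sq_mul_sq_div_sq_affine_le_one hθmin.le h1 (hθmin.le.trans h2) (hlam0 j hj))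
    (fun j hj => (sq_mul_sq_div_sq_affine_le_sq hθmin.le (hθmin.le.trans h1) h2
      (hlam0 j hj)).trans (hlam_sq j hj))
  have htail : C ^ 2 * (N : ℝ) ^ (2 + α) * ((N : ℝ) ^ ρ) ^ (-s) = C ^ 2 * (N : ℝ) ^ ρ := by
    rw [← Real.rpow_mul hN₀.le, mul_assoc, ← Real.rpow_add hN₀, mul_neg, ← sub_eq_add_neg, hρs]
  rw [← mul_sum, htail] at hsum
  calc ∑ j ∈ Icc 1 N, lam j ^ 2 / (θ₁ * lam j + θ₂) ^ 2
      = (θmin ^ 2 * ∑ j ∈ Icc 1 N, lam j ^ 2 / (θ₁ * lam j + θ₂) ^ 2) / θmin ^ 2 :=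
        (mul_div_cancel_left₀ _ (by positivity)).symm
    _ ≤ ((N : ℝ) ^ ρ + 1 + C ^ 2 * (N : ℝ) ^ ρ / s) / θmin ^ 2 := by gcongr
    _ = _ := by rw [hs_def]; field_simp

theorem stmt_8 (N : ℕ) (hN : 1 ≤ N) (b α C θmin θ₁ θ₂ : ℝ)
    (hb : (3 + Real.sqrt 21) / 4 < b) (hα : 0 < α) (hC : 0 ≤ C) (hθmin : 0 < θmin)
    (h1 : θmin ≤ θ₁) (h2 : θmin ≤ θ₂)
    (lam : ℕ → ℝ) (hlam0 : ∀ j ∈ Finset.Icc 1 N, 0 ≤ lam j)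
    (hlam : ∀ j ∈ Finset.Icc 1 N,
      lam j ≤ C * (j : ℝ) ^ (-(2 * b * (2 * b - 1)) / (4 * b + 3)) *
        (N : ℝ) ^ (1 + α / 2)) :
    ∑ j ∈ Finset.Icc 1 N, (lam j) ^ 2 / (θ₁ * lam j + θ₂) ^ 2 ≤
      ((N : ℝ) ^ ((2 + α) * (4 * b + 3) / (4 * b * (2 * b - 1))) + 1) / θmin ^ 2 +
        C ^ 2 * (4 * b + 3) *
          (N : ℝ) ^ ((2 + α) * (4 * b + 3) / (4 * b * (2 * b - 1))) /
          (θmin ^ 2 * (8 * b ^ 2 - 8 * b - 3)) :=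
  stmt_8_general N hN b α C θmin θ₁ θ₂ hb hθmin h1 h2 lam hlam0 hlam
end

section
/- Let N ≥ 1 be an integer, let b > (3 + √21)/4, α > 0, C ≥ 0, θ_min > 0, and let θ₁ ≥ θ_min and θ₂ ≥ θ_min. Let λ_1, …, λ_N be nonnegative reals satisfying λ_j ≤ C · j^{−2b(2b−1)/(4b+3)} · N^{1+α/2} for every j ∈ {1, …, N}, and set ρ = (2+α)(4b+3)/(4b(2b−1)). Then ∑_{j=1}^N λ_j/(θ₁λ_j + θ₂)² ≤ (N^ρ + 1)/θ_min² + C(4b+3)N^ρ/(θ_min²(4b² − 6b − 3)). -/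
/-!
Each term `λ / (θ₁ λ + θ₂) ^ 2` is at most `1 / θmin ^ 2` (since `(θ₁ λ + θ₂) ^ 2 ≥ 2 θ₁ θ₂ λ`) and at
most `λ / θmin ^ 2`. Split the indices at `R = N ^ ρ`: the at most `R + 1` head terms contribute
`(R + 1) / θmin ^ 2`, while on the tail `λ_j ≤ C N ^ (1 + α / 2) j ^ (-s)` with
`s = 2b(2b-1)/(4b+3) > 1`, and comparing `∑_{j > R} j ^ (-s)` with `∫_R^∞ x ^ (-s) dx` gives
`C N ^ (1 + α / 2) R ^ (1 - s) / (θmin ^ 2 (s - 1)) = C N ^ ρ / (θmin ^ 2 (s - 1))`.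
-/

open Finset Real

theorem sum_Ioc_rpow_neg_le {s : ℝ} (hs : 1 < s) {m : ℕ} (hm : 0 < m) (N : ℕ) :
    ∑ j ∈ Ioc m N, (j : ℝ) ^ (-s) ≤ (m : ℝ) ^ (1 - s) / (s - 1) := by
  have hm' : (0 : ℝ) < m := by exact_mod_cast hm
  have anti : AntitoneOn (fun x : ℝ ↦ x ^ (-s)) (Set.Icc m N) :=
    (antitoneOn_rpow_Ioi_of_exponent_nonpos (by linarith)).mono fun x hx ↦ hm'.trans_le hx.1
  calc ∑ j ∈ Ioc m N, (j : ℝ) ^ (-s) = ∑ n ∈ Ico m N, ((n + 1 : ℕ) : ℝ) ^ (-s) := by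
        rw [← Finset.Ico_add_one_add_one_eq_Ioc]
        exact (sum_Ico_add' (fun j : ℕ ↦ (j : ℝ) ^ (-s)) m N 1).symm
    _ ≤ ∫ x in Set.Ioi (m : ℝ), x ^ (-s) :=
        anti.sum_Ico_le_integral (integrableOn_Ioi_rpow_of_lt (by linarith) hm')
          fun t ht ↦ rpow_nonneg (hm'.trans ht).le _
    _ = (m : ℝ) ^ (1 - s) / (s - 1) := by
        rw [integral_Ioi_rpow_of_lt (by linarith) hm', ← neg_div_neg_eq, neg_neg]
        ring_nf

theorem sum_Icc_le_of_le_of_le_mul_rpow_neg {f : ℕ → ℝ} {N : ℕ} {A B s R : ℝ}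
    (hA : 0 ≤ A) (hB : 0 ≤ B) (hs : 1 < s) (hR : 0 < R)
    (hfA : ∀ j ∈ Icc 1 N, f j ≤ A) (hfB : ∀ j ∈ Icc 1 N, f j ≤ B * (j : ℝ) ^ (-s)) :
    ∑ j ∈ Icc 1 N, f j ≤ A * (R + 1) + B * R ^ (1 - s) / (s - 1) := by
  set m := ⌈R⌉₊
  have hm : 0 < m := Nat.ceil_pos.mpr hR
  rw [← sum_filter_add_sum_filter_not (Icc 1 N) (· ≤ m)]
  gcongr ?_ + ?_
  · have hcard : #{j ∈ Icc 1 N | j ≤ m} ≤ m := by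
      calc #{j ∈ Icc 1 N | j ≤ m} ≤ #(Icc 1 m) :=
            card_le_card fun j hj ↦ by simp only [mem_filter, mem_Icc] at hj ⊢; omega
        _ = m := by simp
    calc ∑ j ∈ Icc 1 N with j ≤ m, f j ≤ ∑ j ∈ Icc 1 N with j ≤ m, A :=
          sum_le_sum fun j hj ↦ hfA j (mem_of_mem_filter j hj)
      _ = #{j ∈ Icc 1 N | j ≤ m} * A := by rw [sum_const, nsmul_eq_mul]
      _ ≤ m * A := by gcongr
      _ ≤ A * (R + 1) := by
          rw [mul_comm]
          exact mul_le_mul_of_nonneg_left (Nat.ceil_lt_add_one hR.le).le hA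
  · have htail : {j ∈ Icc 1 N | ¬ j ≤ m} = Ioc m N := by
      ext j; simp only [mem_filter, mem_Icc, mem_Ioc]; omega
    rw [htail]
    calc ∑ j ∈ Ioc m N, f j ≤ ∑ j ∈ Ioc m N, B * (j : ℝ) ^ (-s) :=
          sum_le_sum fun j hj ↦ hfB j (by simp only [mem_Ioc, mem_Icc] at hj ⊢; omega)
      _ = B * ∑ j ∈ Ioc m N, (j : ℝ) ^ (-s) := (mul_sum _ _ _).symm
      _ ≤ B * ((m : ℝ) ^ (1 - s) / (s - 1)) := by gcongr; exact sum_Ioc_rpow_neg_le hs hm N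
      _ ≤ B * (R ^ (1 - s) / (s - 1)) := by
          gcongr B * (?_ / _)
          exact rpow_le_rpow_of_nonpos hR (Nat.le_ceil R) (by linarith)
      _ = B * R ^ (1 - s) / (s - 1) := (mul_div_assoc _ _ _).symm

theorem div_mul_add_sq_le_one_div_sq {x θ θ₁ θ₂ : ℝ} (hθ : 0 < θ) (h₁ : θ ≤ θ₁) (h₂ : θ ≤ θ₂)
    (hx : 0 ≤ x) : x / (θ₁ * x + θ₂) ^ 2 ≤ 1 / θ ^ 2 := by
  have hθθ : θ ^ 2 ≤ θ₁ * θ₂ := by nlinarith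
  have hpos : 0 < θ₁ * x + θ₂ := by nlinarith
  rw [div_le_div_iff₀ (by positivity) (by positivity)]
  nlinarith [sq_nonneg (θ₁ * x - θ₂), mul_le_mul_of_nonneg_left hθθ hx]

theorem div_mul_add_sq_le_div_sq {x θ θ₁ θ₂ : ℝ} (hθ : 0 < θ) (h₁ : 0 ≤ θ₁) (h₂ : θ ≤ θ₂)
    (hx : 0 ≤ x) : x / (θ₁ * x + θ₂) ^ 2 ≤ x / θ ^ 2 := by
  gcongr
  nlinarith

theorem four_mul_sq_sub_six_mul_sub_three_pos {b : ℝ} (hb : (3 + √21) / 4 < b) :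
    0 < 4 * b ^ 2 - 6 * b - 3 := by
  have h21 : √21 ^ 2 = 21 := sq_sqrt (by norm_num)
  have hpos : 0 < b - (3 - √21) / 4 := by linarith [sqrt_nonneg 21]
  have hfac : 4 * b ^ 2 - 6 * b - 3 = 4 * (b - (3 + √21) / 4) * (b - (3 - √21) / 4) := by
    linear_combination (1 / 4 : ℝ) * h21
  rw [hfac]
  have : 0 < b - (3 + √21) / 4 := by linarith
  positivity

theorem stmt_9_general (N : ℕ) (hN : 1 ≤ N) (b α C θmin θ₁ θ₂ : ℝ)
    (hb : (3 + Real.sqrt 21) / 4 < b) (hC : 0 ≤ C) (hθmin : 0 < θmin)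
    (h1 : θmin ≤ θ₁) (h2 : θmin ≤ θ₂)
    (lam : ℕ → ℝ) (hlam0 : ∀ j ∈ Finset.Icc 1 N, 0 ≤ lam j)
    (hlam : ∀ j ∈ Finset.Icc 1 N,
      lam j ≤ C * (j : ℝ) ^ (-(2 * b * (2 * b - 1)) / (4 * b + 3)) *
        (N : ℝ) ^ (1 + α / 2)) :
    ∑ j ∈ Finset.Icc 1 N, lam j / (θ₁ * lam j + θ₂) ^ 2 ≤
      ((N : ℝ) ^ ((2 + α) * (4 * b + 3) / (4 * b * (2 * b - 1))) + 1) / θmin ^ 2 +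
        C * (4 * b + 3) *
          (N : ℝ) ^ ((2 + α) * (4 * b + 3) / (4 * b * (2 * b - 1))) /
          (θmin ^ 2 * (4 * b ^ 2 - 6 * b - 3)) := by
  have hq := four_mul_sq_sub_six_mul_sub_three_pos hb
  have hb0 : 0 < b := by nlinarith [sqrt_nonneg 21]
  have h2b : 0 < 2 * b - 1 := by nlinarith [sqrt_nonneg 21]
  set s := 2 * b * (2 * b - 1) / (4 * b + 3) with hs_def
  set ρ := (2 + α) * (4 * b + 3) / (4 * b * (2 * b - 1)) with hρ_def
  have hs1 : s - 1 = (4 * b ^ 2 - 6 * b - 3) / (4 * b + 3) := by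
    rw [hs_def]; field_simp; ring
  have hs : 1 < s := by linarith [div_pos hq (by linarith : (0 : ℝ) < 4 * b + 3)]
  have hρs : ρ * s = 1 + α / 2 := by
    rw [hρ_def, hs_def]; field_simp; ring
  have hN0 : (0 : ℝ) < N := by exact_mod_cast hN
  have hbalance : (N : ℝ) ^ (1 + α / 2) * ((N : ℝ) ^ ρ) ^ (1 - s) = (N : ℝ) ^ ρ := by
    rw [← rpow_mul hN0.le, ← rpow_add hN0]
    congr 1
    linear_combination -hρs
  have key := sum_Icc_le_of_le_of_le_mul_rpow_neg (f := fun j ↦ lam j / (θ₁ * lam j + θ₂) ^ 2)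
    (A := 1 / θmin ^ 2) (B := C * (N : ℝ) ^ (1 + α / 2) / θmin ^ 2) (R := (N : ℝ) ^ ρ)
    (by positivity) (by positivity) hs (by positivity)
    (fun j hj ↦ div_mul_add_sq_le_one_div_sq hθmin h1 h2 (hlam0 j hj))
    (fun j hj ↦ by
      have hlj := hlam j hj
      rw [show -(2 * b * (2 * b - 1)) / (4 * b + 3) = -s by rw [hs_def]; ring] at hlj
      calc lam j / (θ₁ * lam j + θ₂) ^ 2 ≤ lam j / θmin ^ 2 :=
            div_mul_add_sq_le_div_sq hθmin (hθmin.le.trans h1) h2 (hlam0 j hj)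
        _ ≤ C * (j : ℝ) ^ (-s) * (N : ℝ) ^ (1 + α / 2) / θmin ^ 2 := by gcongr
        _ = _ := by ring)
  have htail : C * (N : ℝ) ^ (1 + α / 2) / θmin ^ 2 * ((N : ℝ) ^ ρ) ^ (1 - s) =
      C * (N : ℝ) ^ ρ / θmin ^ 2 := by
    rw [div_mul_eq_mul_div, mul_assoc, hbalance]
  refine key.trans_eq ?_
  rw [htail, hs1]
  field_simp

theorem stmt_9 (N : ℕ) (hN : 1 ≤ N) (b α C θmin θ₁ θ₂ : ℝ)
    (hb : (3 + Real.sqrt 21) / 4 < b) (hα : 0 < α) (hC : 0 ≤ C) (hθmin : 0 < θmin)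
    (h1 : θmin ≤ θ₁) (h2 : θmin ≤ θ₂)
    (lam : ℕ → ℝ) (hlam0 : ∀ j ∈ Finset.Icc 1 N, 0 ≤ lam j)
    (hlam : ∀ j ∈ Finset.Icc 1 N,
      lam j ≤ C * (j : ℝ) ^ (-(2 * b * (2 * b - 1)) / (4 * b + 3)) *
        (N : ℝ) ^ (1 + α / 2)) :
    ∑ j ∈ Finset.Icc 1 N, lam j / (θ₁ * lam j + θ₂) ^ 2 ≤
      ((N : ℝ) ^ ((2 + α) * (4 * b + 3) / (4 * b * (2 * b - 1))) + 1) / θmin ^ 2 +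
        C * (4 * b + 3) *
          (N : ℝ) ^ ((2 + α) * (4 * b + 3) / (4 * b * (2 * b - 1))) /
          (θmin ^ 2 * (4 * b ^ 2 - 6 * b - 3)) :=
  stmt_9_general N hN b α C θmin θ₁ θ₂ hb hC hθmin h1 h2 lam hlam0 hlam
end

section
/- Let N ≥ 1 be an integer, let b ≥ (3 + √21)/4, α > 0, C ≥ 1, and let 0 < θ_min ≤ θ₁, θ₂ ≤ θ_max. Let λ_1, …, λ_N be nonnegative reals satisfying λ_j ≤ C · j^{−2b(2b−1)/(4b+3)} · N^{1+α/2} for every j ∈ {1, …, N}, and set ρ = (2+α)(4b+3)/(4b(2b−1)). Then (N − C N^ρ)/(4θ_max²) ≤ ∑_{j=1}^N 1/(θ₁λ_j + θ₂)² ≤ N/θ_min². -/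
/-!
Every term is at most `1 / θmin²` because the denominators are at least `θ₂ ≥ θmin`. For the
lower bound, `θ₁ λⱼ + θ₂ ≤ 2 θmax` as soon as `λⱼ ≤ 1`, and the decay hypothesis
`λⱼ ≤ A j^{-β}` with `A = C N^{1+α/2}` forces `λⱼ ≤ 1` for every `j > A^{1/β}`; since
`β ≥ 1` and `C ≥ 1`, `A^{1/β} ≤ C N^ρ`.
-/

open Finset Real

noncomputable def eigenDecayExponent (b : ℝ) : ℝ := 2 * b * (2 * b - 1) / (4 * b + 3)

/-- `(3 + √21) / 4` is the larger root of `4b² - 6b - 3`, the numerator of `β - 1`. -/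
theorem one_le_eigenDecayExponent {b : ℝ} (hb : (3 + √21) / 4 ≤ b) :
    1 ≤ eigenDecayExponent b := by
  have hsqrt : √21 ^ 2 = 21 := sq_sqrt (by norm_num)
  have hsqrt_ge : (4 : ℝ) ≤ √21 := by nlinarith [sqrt_nonneg 21]
  rw [eigenDecayExponent, le_div_iff₀ (by linarith)]
  nlinarith

theorem one_add_half_mul_eigenDecayExponent_inv {b : ℝ} (hb : eigenDecayExponent b ≠ 0)
    (α : ℝ) :
    (1 + α / 2) * (eigenDecayExponent b)⁻¹ = (2 + α) * (4 * b + 3) / (4 * b * (2 * b - 1)) := by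
  rw [eigenDecayExponent, ne_eq, div_eq_zero_iff, not_or, mul_eq_zero, mul_eq_zero,
    not_or, not_or] at hb
  obtain ⟨⟨⟨-, hb0⟩, h2b⟩, h4b⟩ := hb
  rw [eigenDecayExponent]
  field_simp
  ring

theorem card_filter_one_lt_le_rpow_inv {N : ℕ} {lam : ℕ → ℝ} {A β : ℝ} (hA : 0 ≤ A)
    (hβ : 0 < β) (hlam : ∀ j ∈ Icc 1 N, lam j ≤ A * (j : ℝ) ^ (-β)) :
    (#{j ∈ Icc 1 N | 1 < lam j} : ℝ) ≤ A ^ β⁻¹ := by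
  have hsub : {j ∈ Icc 1 N | 1 < lam j} ⊆ Icc 1 ⌊A ^ β⁻¹⌋₊ := by
    intro j hj
    obtain ⟨hjI, hj1⟩ := mem_filter.mp hj
    have hj0 : (0 : ℝ) ≤ j := j.cast_nonneg
    have hjβ : (0 : ℝ) < (j : ℝ) ^ β := rpow_pos_of_pos (by exact_mod_cast (mem_Icc.mp hjI).1) β
    have hpow_lt : (j : ℝ) ^ β < A := by
      have := hj1.trans_le (hlam j hjI)
      rwa [rpow_neg hj0, ← div_eq_mul_inv, one_lt_div hjβ] at this
    have hj_lt : (j : ℝ) < A ^ β⁻¹ := (lt_rpow_inv_iff_of_pos hj0 hA hβ).mpr hpow_lt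
    exact mem_Icc.mpr ⟨(mem_Icc.mp hjI).1, Nat.le_floor hj_lt.le⟩
  calc (#{j ∈ Icc 1 N | 1 < lam j} : ℝ) ≤ ⌊A ^ β⁻¹⌋₊ := by
        exact_mod_cast (card_le_card hsub).trans (Nat.card_Icc 1 _).le
    _ ≤ A ^ β⁻¹ := Nat.floor_le (by positivity)

theorem sub_rpow_inv_le_card_filter_le_one {N : ℕ} {lam : ℕ → ℝ} {A β : ℝ} (hA : 0 ≤ A)
    (hβ : 0 < β) (hlam : ∀ j ∈ Icc 1 N, lam j ≤ A * (j : ℝ) ^ (-β)) :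
    (N : ℝ) - A ^ β⁻¹ ≤ #{j ∈ Icc 1 N | lam j ≤ 1} := by
  have hsplit := card_filter_add_card_filter_not (s := Icc 1 N) (fun j => lam j ≤ 1)
  simp only [not_le, Nat.card_Icc, add_tsub_cancel_right] at hsplit
  have hsplit' : (#{j ∈ Icc 1 N | lam j ≤ 1} : ℝ) + #{j ∈ Icc 1 N | 1 < lam j} = N := by
    exact_mod_cast hsplit
  linarith [card_filter_one_lt_le_rpow_inv hA hβ hlam]

section InverseSquareSums

variable {ι : Type*} (s : Finset ι) {f : ι → ℝ}

theorem sum_one_div_sq_le {m : ℝ} (hm : 0 < m) (hf : ∀ i ∈ s, m ≤ f i) :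
    ∑ i ∈ s, 1 / f i ^ 2 ≤ #s / m ^ 2 := by
  calc ∑ i ∈ s, 1 / f i ^ 2 ≤ ∑ _i ∈ s, 1 / m ^ 2 := by
        gcongr with i hi
        exact hf i hi
    _ = #s / m ^ 2 := by rw [sum_const, nsmul_eq_mul, mul_one_div]

theorem card_filter_div_le_sum_one_div_sq (p : ι → Prop) [DecidablePred p] {M : ℝ}
    (hf : ∀ i ∈ s, 0 < f i) (hM : ∀ i ∈ s, p i → f i ≤ M) :
    #{i ∈ s | p i} / M ^ 2 ≤ ∑ i ∈ s, 1 / f i ^ 2 := by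
  calc (#{i ∈ s | p i} : ℝ) / M ^ 2 = ∑ _i ∈ s with p _i, 1 / M ^ 2 := by
        rw [sum_const, nsmul_eq_mul, mul_one_div]
    _ ≤ ∑ i ∈ s with p i, 1 / f i ^ 2 := sum_le_sum fun i hi => by
        obtain ⟨his, hip⟩ := mem_filter.mp hi
        have := hf i his
        gcongr
        exact hM i his hip
    _ ≤ ∑ i ∈ s, 1 / f i ^ 2 :=
        sum_le_sum_of_subset_of_nonneg (filter_subset _ _) fun i _ _ => by positivity

end InverseSquareSums

theorem stmt_10_general (N : ℕ) (b α C θmin θmax θ₁ θ₂ : ℝ)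
    (hb : (3 + Real.sqrt 21) / 4 ≤ b) (hC : 1 ≤ C) (hθmin : 0 < θmin)
    (h1 : θmin ≤ θ₁) (h1' : θ₁ ≤ θmax) (h2 : θmin ≤ θ₂) (h2' : θ₂ ≤ θmax)
    (lam : ℕ → ℝ) (hlam0 : ∀ j ∈ Finset.Icc 1 N, 0 ≤ lam j)
    (hlam : ∀ j ∈ Finset.Icc 1 N,
      lam j ≤ C * (j : ℝ) ^ (-(2 * b * (2 * b - 1)) / (4 * b + 3)) *
        (N : ℝ) ^ (1 + α / 2)) :
    ((N : ℝ) - C * (N : ℝ) ^ ((2 + α) * (4 * b + 3) / (4 * b * (2 * b - 1)))) /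
        (4 * θmax ^ 2) ≤
      ∑ j ∈ Finset.Icc 1 N, 1 / (θ₁ * lam j + θ₂) ^ 2 ∧
    ∑ j ∈ Finset.Icc 1 N, 1 / (θ₁ * lam j + θ₂) ^ 2 ≤ (N : ℝ) / θmin ^ 2 := by
  have hβ : 1 ≤ eigenDecayExponent b := one_le_eigenDecayExponent hb
  have hden_ge : ∀ j ∈ Icc 1 N, θ₂ ≤ θ₁ * lam j + θ₂ := fun j hj => by
    nlinarith [hlam0 j hj]
  refine ⟨?_, by simpa using sum_one_div_sq_le _ hθmin fun j hj => h2.trans (hden_ge j hj)⟩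
  have hgood := sub_rpow_inv_le_card_filter_le_one (A := C * (N : ℝ) ^ (1 + α / 2))
    (by positivity) (by linarith) fun j hj => by
      have hexp : -(2 * b * (2 * b - 1)) / (4 * b + 3) = -eigenDecayExponent b := neg_div _ _
      exact (hexp ▸ hlam j hj).trans_eq (mul_right_comm _ _ _)
  have hthreshold : (C * (N : ℝ) ^ (1 + α / 2)) ^ (eigenDecayExponent b)⁻¹ ≤
      C * (N : ℝ) ^ ((2 + α) * (4 * b + 3) / (4 * b * (2 * b - 1))) := by
    rw [mul_rpow (by linarith) (by positivity), ← rpow_mul N.cast_nonneg,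
      one_add_half_mul_eigenDecayExponent_inv (by linarith)]
    gcongr
    exact rpow_le_self_of_one_le hC (inv_le_one_of_one_le₀ hβ)
  calc _ ≤ (#{j ∈ Icc 1 N | lam j ≤ 1} : ℝ) / (2 * θmax) ^ 2 := by
        rw [mul_pow, show (2 : ℝ) ^ 2 = 4 by norm_num]
        gcongr
        linarith
    _ ≤ _ := card_filter_div_le_sum_one_div_sq _ _
        (fun j hj => hθmin.trans_le (h2.trans (hden_ge j hj)))
        fun j _ hj1 => by nlinarith

theorem stmt_10 (N : ℕ) (hN : 1 ≤ N) (b α C θmin θmax θ₁ θ₂ : ℝ)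
    (hb : (3 + Real.sqrt 21) / 4 ≤ b) (hα : 0 < α) (hC : 1 ≤ C) (hθmin : 0 < θmin)
    (h1 : θmin ≤ θ₁) (h1' : θ₁ ≤ θmax) (h2 : θmin ≤ θ₂) (h2' : θ₂ ≤ θmax)
    (lam : ℕ → ℝ) (hlam0 : ∀ j ∈ Finset.Icc 1 N, 0 ≤ lam j)
    (hlam : ∀ j ∈ Finset.Icc 1 N,
      lam j ≤ C * (j : ℝ) ^ (-(2 * b * (2 * b - 1)) / (4 * b + 3)) *
        (N : ℝ) ^ (1 + α / 2)) :
    ((N : ℝ) - C * (N : ℝ) ^ ((2 + α) * (4 * b + 3) / (4 * b * (2 * b - 1)))) /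
        (4 * θmax ^ 2) ≤
      ∑ j ∈ Finset.Icc 1 N, 1 / (θ₁ * lam j + θ₂) ^ 2 ∧
    ∑ j ∈ Finset.Icc 1 N, 1 / (θ₁ * lam j + θ₂) ^ 2 ≤ (N : ℝ) / θmin ^ 2 :=
  stmt_10_general N b α C θmin θmax θ₁ θ₂ hb hC hθmin h1 h1' h2 h2' lam hlam0 hlam
end

section
/- Let 0 < θ_min ≤ θ₁, θ₂, θ₁*, θ₂* ≤ θ_max, let M ≥ 2 be an integer, let τ > 0, b > 0, C₁ ≥ 0, and let S₁₁, S₁₂, S₂₂ be nonnegative reals satisfying S₁₁ ≥ (log M)/(16 b θ_max²), S₁₂ ≤ (log M)/(b θ_min²), and S₂₂ ≥ (M − C₁ log M)/(4θ_max²). Define g₁ = [ (θ₁ − θ₁*)S₁₁ + (θ₂ − θ₂*)S₁₂ ] / (2τ log M) and g₂ = [ (θ₁ − θ₁*)S₁₂ + (θ₂ − θ₂*)S₂₂ ] / (2M). Then (θ₁ − θ₁*)g₁ + (θ₂ − θ₂*)g₂ ≥ (γ/2)·[ (θ₁ − θ₁*)² + (θ₂ − θ₂*)² ] − ( C₁/(8θ_max²)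 + 1/(2bθ_min²) ) · (θ_max − θ_min)² · (log M)/M, where γ = min{ 1/(32τbθ_max²), 1/(4θ_max²) − 8θ_max²/(τbθ_min⁴) }. -/
/-!
Write a = θ₁ - θ₁*, c = θ₂ - θ₂*, L = log M. Then ⟨θ - θ*, g⟩ is the quadratic form
a²S₁₁/(2τL) + ac S₁₂/(2τL) + ac S₁₂/(2M) + c²S₂₂/(2M). The a² term is at least a²/(32τbθmax²)
and the c² term at least c²/(8θmax²) up to an O(L/M) error. Weighted AM-GM absorbs the first
cross term into half of the a² bound plus a c² term of size 4θmax²/(τbθmin⁴), which is where γ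
comes from, while the second cross term is only O(L/M) because |a|, |c| ≤ θmax - θmin.
-/

lemma neg_abs_mul_le_mul_of_le {x S U : ℝ} (hS : 0 ≤ S) (hSU : S ≤ U) : -(|x| * U) ≤ x * S :=
  calc -(|x| * U) ≤ -|x| * S := by rw [neg_mul]; gcongr
    _ ≤ x * S := mul_le_mul_of_nonneg_right (neg_abs_le x) hS

lemma abs_mul_le_add_mul_sq {ε : ℝ} (hε : 0 < ε) (x y : ℝ) :
    |x * y| ≤ (ε * x ^ 2 + ε⁻¹ * y ^ 2) / 2 := by
  have h := two_mul_le_add_mul_sq (a := |x|) (b := |y|) hε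
  rw [sq_abs, sq_abs] at h
  rw [abs_mul]
  linarith

section GradientTerms

variable {θmin θmax τ b L a c : ℝ}

lemma logScaled_diag_term_lower_bound (hτ : 0 < τ) (hb : 0 < b) (hθmax : 0 < θmax) (hL : 0 < L)
    {S : ℝ} (hS : L / (16 * b * θmax ^ 2) ≤ S) :
    a ^ 2 / (32 * τ * b * θmax ^ 2) ≤ a ^ 2 * S / (2 * τ * L) :=
  calc a ^ 2 / (32 * τ * b * θmax ^ 2) = a ^ 2 * (L / (16 * b * θmax ^ 2)) / (2 * τ * L) := by
        field_simp; ring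
    _ ≤ a ^ 2 * S / (2 * τ * L) := by gcongr

lemma logScaled_cross_term_lower_bound (hτ : 0 < τ) (hb : 0 < b) (hθmin : 0 < θmin)
    (hθmax : 0 < θmax) (hL : 0 < L) {S : ℝ} (hS0 : 0 ≤ S) (hS : S ≤ L / (b * θmin ^ 2)) :
    -(a ^ 2 / (64 * τ * b * θmax ^ 2) + 4 * θmax ^ 2 * c ^ 2 / (τ * b * θmin ^ 4)) ≤
      a * c * S / (2 * τ * L) := by
  -- AM-GM weight chosen so that the a² part uses up half of the a² bound of the diagonal term
  have hε : 0 < θmin ^ 2 / (16 * θmax ^ 2) := by positivity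
  calc -(a ^ 2 / (64 * τ * b * θmax ^ 2) + 4 * θmax ^ 2 * c ^ 2 / (τ * b * θmin ^ 4))
      = -((θmin ^ 2 / (16 * θmax ^ 2) * a ^ 2 + (θmin ^ 2 / (16 * θmax ^ 2))⁻¹ * c ^ 2) / 2
          * (L / (b * θmin ^ 2))) / (2 * τ * L) := by
        field_simp; ring
    _ ≤ -(|a * c| * (L / (b * θmin ^ 2))) / (2 * τ * L) := by
        gcongr; exact abs_mul_le_add_mul_sq hε a c
    _ ≤ a * c * S / (2 * τ * L) := by
        gcongr; exact neg_abs_mul_le_mul_of_le hS0 hS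

variable {D m : ℝ}

lemma sizeScaled_cross_term_lower_bound (hb : 0 < b) (hθmin : 0 < θmin) (hm : 0 < m)
    (hL : 0 ≤ L) (ha : |a| ≤ D) (hc : |c| ≤ D) {S : ℝ} (hS0 : 0 ≤ S) (hS : S ≤ L / (b * θmin ^ 2)) :
    -(1 / (2 * b * θmin ^ 2) * D ^ 2 * (L / m)) ≤ a * c * S / (2 * m) :=
  calc -(1 / (2 * b * θmin ^ 2) * D ^ 2 * (L / m))
      = -(D ^ 2 * (L / (b * θmin ^ 2))) / (2 * m) := by
        field_simp
    _ ≤ -(|a * c| * (L / (b * θmin ^ 2))) / (2 * m) := by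
        rw [abs_mul, sq]; gcongr; exact (abs_nonneg a).trans ha
    _ ≤ a * c * S / (2 * m) := by
        gcongr; exact neg_abs_mul_le_mul_of_le hS0 hS

lemma sizeScaled_diag_term_lower_bound (hθmax : 0 < θmax) (hm : 0 < m) (hL : 0 ≤ L)
    {C₁ : ℝ} (hC₁ : 0 ≤ C₁) (hc : |c| ≤ D) {S : ℝ} (hS : (m - C₁ * L) / (4 * θmax ^ 2) ≤ S) :
    c ^ 2 / (8 * θmax ^ 2) - C₁ / (8 * θmax ^ 2) * D ^ 2 * (L / m) ≤ c ^ 2 * S / (2 * m) :=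
  calc c ^ 2 / (8 * θmax ^ 2) - C₁ / (8 * θmax ^ 2) * D ^ 2 * (L / m)
      ≤ c ^ 2 / (8 * θmax ^ 2) - C₁ / (8 * θmax ^ 2) * c ^ 2 * (L / m) := by
        have hc_sq : c ^ 2 ≤ D ^ 2 := sq_le_sq' (neg_le_of_abs_le hc) (le_of_abs_le hc)
        gcongr
    _ = c ^ 2 * ((m - C₁ * L) / (4 * θmax ^ 2)) / (2 * m) := by field_simp; ring
    _ ≤ c ^ 2 * S / (2 * m) := by gcongr

end GradientTerms

theorem stmt_11_general (θmin θmax θ₁ θ₂ θ₁s θ₂s : ℝ) (hθmin : 0 < θmin)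
    (h1 : θmin ≤ θ₁) (h1' : θ₁ ≤ θmax) (h2 : θmin ≤ θ₂) (h2' : θ₂ ≤ θmax)
    (h3 : θmin ≤ θ₁s) (h3' : θ₁s ≤ θmax) (h4 : θmin ≤ θ₂s) (h4' : θ₂s ≤ θmax)
    (M : ℕ) (hM : 2 ≤ M) (τ b C₁ : ℝ) (hτ : 0 < τ) (hb : 0 < b) (hC₁ : 0 ≤ C₁)
    (S₁₁ S₁₂ S₂₂ : ℝ) (hS₁₂0 : 0 ≤ S₁₂)
    (hS₁₁ : Real.log M / (16 * b * θmax ^ 2) ≤ S₁₁)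
    (hS₁₂ : S₁₂ ≤ Real.log M / (b * θmin ^ 2))
    (hS₂₂ : ((M : ℝ) - C₁ * Real.log M) / (4 * θmax ^ 2) ≤ S₂₂)
    (g₁ g₂ γ : ℝ)
    (hg₁ : g₁ = ((θ₁ - θ₁s) * S₁₁ + (θ₂ - θ₂s) * S₁₂) / (2 * τ * Real.log M))
    (hg₂ : g₂ = ((θ₁ - θ₁s) * S₁₂ + (θ₂ - θ₂s) * S₂₂) / (2 * M))
    (hγ : γ = min (1 / (32 * τ * b * θmax ^ 2))
      (1 / (4 * θmax ^ 2) - 8 * θmax ^ 2 / (τ * b * θmin ^ 4))) :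
    (θ₁ - θ₁s) * g₁ + (θ₂ - θ₂s) * g₂ ≥
      γ / 2 * ((θ₁ - θ₁s) ^ 2 + (θ₂ - θ₂s) ^ 2) -
        (C₁ / (8 * θmax ^ 2) + 1 / (2 * b * θmin ^ 2)) * (θmax - θmin) ^ 2 *
          (Real.log M / M) := by
  have hM₁ : (1 : ℝ) < M := by exact_mod_cast hM
  have hL : 0 < Real.log M := Real.log_pos hM₁
  have hM₀ : (0 : ℝ) < M := zero_lt_one.trans hM₁
  have hθmax : 0 < θmax := hθmin.trans_le (h1.trans h1')
  have ha : |θ₁ - θ₁s| ≤ θmax - θmin := by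
    simpa only [Real.dist_eq] using Real.dist_le_of_mem_Icc ⟨h1, h1'⟩ ⟨h3, h3'⟩
  have hc : |θ₂ - θ₂s| ≤ θmax - θmin := by
    simpa only [Real.dist_eq] using Real.dist_le_of_mem_Icc ⟨h2, h2'⟩ ⟨h4, h4'⟩
  have hγa := mul_le_mul_of_nonneg_right (hγ ▸ min_le_left _ _) (sq_nonneg (θ₁ - θ₁s))
  have hγc := mul_le_mul_of_nonneg_right (hγ ▸ min_le_right _ _) (sq_nonneg (θ₂ - θ₂s))
  rw [hg₁, hg₂]
  linear_combination logScaled_diag_term_lower_bound (a := θ₁ - θ₁s) hτ hb hθmax hL hS₁₁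
    + logScaled_cross_term_lower_bound (a := θ₁ - θ₁s) (c := θ₂ - θ₂s) hτ hb hθmin hθmax hL
        hS₁₂0 hS₁₂
    + sizeScaled_cross_term_lower_bound hb hθmin hM₀ hL.le ha hc hS₁₂0 hS₁₂
    + sizeScaled_diag_term_lower_bound hθmax hM₀ hL.le hC₁ hc hS₂₂ + hγa / 2 + hγc / 2

theorem stmt_11 (θmin θmax θ₁ θ₂ θ₁s θ₂s : ℝ) (hθmin : 0 < θmin)
    (h1 : θmin ≤ θ₁) (h1' : θ₁ ≤ θmax) (h2 : θmin ≤ θ₂) (h2' : θ₂ ≤ θmax)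
    (h3 : θmin ≤ θ₁s) (h3' : θ₁s ≤ θmax) (h4 : θmin ≤ θ₂s) (h4' : θ₂s ≤ θmax)
    (M : ℕ) (hM : 2 ≤ M) (τ b C₁ : ℝ) (hτ : 0 < τ) (hb : 0 < b) (hC₁ : 0 ≤ C₁)
    (S₁₁ S₁₂ S₂₂ : ℝ) (hS₁₁0 : 0 ≤ S₁₁) (hS₁₂0 : 0 ≤ S₁₂) (hS₂₂0 : 0 ≤ S₂₂)
    (hS₁₁ : Real.log M / (16 * b * θmax ^ 2) ≤ S₁₁)
    (hS₁₂ : S₁₂ ≤ Real.log M / (b * θmin ^ 2))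
    (hS₂₂ : ((M : ℝ) - C₁ * Real.log M) / (4 * θmax ^ 2) ≤ S₂₂)
    (g₁ g₂ γ : ℝ)
    (hg₁ : g₁ = ((θ₁ - θ₁s) * S₁₁ + (θ₂ - θ₂s) * S₁₂) / (2 * τ * Real.log M))
    (hg₂ : g₂ = ((θ₁ - θ₁s) * S₁₂ + (θ₂ - θ₂s) * S₂₂) / (2 * M))
    (hγ : γ = min (1 / (32 * τ * b * θmax ^ 2))
      (1 / (4 * θmax ^ 2) - 8 * θmax ^ 2 / (τ * b * θmin ^ 4))) :
    (θ₁ - θ₁s) * g₁ + (θ₂ - θ₂s) * g₂ ≥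
      γ / 2 * ((θ₁ - θ₁s) ^ 2 + (θ₂ - θ₂s) ^ 2) -
        (C₁ / (8 * θmax ^ 2) + 1 / (2 * b * θmin ^ 2)) * (θmax - θmin) ^ 2 *
          (Real.log M / M) :=
  stmt_11_general θmin θmax θ₁ θ₂ θ₁s θ₂s hθmin h1 h1' h2 h2' h3 h3' h4 h4' M hM τ b C₁ hτ hb hC₁
    S₁₁ S₁₂ S₂₂ hS₁₂0 hS₁₁ hS₁₂ hS₂₂ g₁ g₂ γ hg₁ hg₂ hγ
end
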